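/- For a matroid M on n ≥ 2 elements (with M not equal to U_{0,1}), the beta invariant β(M) is zero if and only if M is disconnected (i.e., M is a direct sum of two matroids on nonempty ground sets). -/

import Mathlib

open Matroid

/-- Deletion of a set of elements from a matroid. -/
def mDelete (M : Matroid ℕ) (D : Set ℕ) : Matroid ℕ := M ↾ (M.E \ D)

/-- Contraction of a set of elements, defined by duality: `M ／ C = (M✶ ＼ C)✶`. -/
def mContract (M : Matroid ℕ) (C : Set ℕ) : Matroid ℕ := (mDelete M✶ C)✶

/-- `e` is a loop of `M`: an element of the ground set whose singleton is dependent. -/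
def IsLoopE (M : Matroid ℕ) (e : ℕ) : Prop := e ∈ M.E ∧ ¬ M.Indep {e}

/-- `e` is a coloop of `M`: an element of the ground set lying in every base. -/
def IsColoopE (M : Matroid ℕ) (e : ℕ) : Prop := e ∈ M.E ∧ ∀ B, M.IsBase B → e ∈ B

/-- `M` decomposes as the direct sum of its restrictions to `A` and `B`, where `A, B` is a
partition of the ground set into two nonempty parts: a set is independent iff its
intersections with `A` and with `B` are both independent. -/
def IsDirectSumDecomp (M : Matroid ℕ) (A B : Set ℕ) : Prop :=
  A.Nonempty ∧ B.Nonempty ∧ Disjoint A B ∧ A ∪ B = M.E ∧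
    ∀ I ⊆ M.E, (M.Indep I ↔ M.Indep (I ∩ A) ∧ M.Indep (I ∩ B))

/-!
Deletion–contraction `β(M) = β(M ／ i) + β(M ＼ i)` for an element `i` that is neither a loop
nor a coloop drives three inductions on `|E|`. First, `β ≥ 0` on nonempty matroids. Second, `β`
vanishes on disconnected matroids, since a separation `(A, B)` of `M` with `i ∈ A` restricts to
the separation `(A \ {i}, B)` of both `M ＼ i` and `M ／ i` (unless `A = {i}`, when `i` is a loop
or a coloop). Third, `β ≥ 1` on connected matroids, by Tutte's lemma: if `M ＼ i` and `M ／ i`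
are both disconnected then so is `M`, which follows from submodularity of the rank function
applied to two crossing separations. In the base case `|E| = 2`, the deletion is `U_{1,1}`.
-/

open Set

lemma Set.two_le_encard_iff_nontrivial {α : Type*} {s : Set α} : 2 ≤ s.encard ↔ s.Nontrivial := by
  rw [← one_add_one_eq_two, ENat.add_one_le_iff ENat.one_ne_top, one_lt_encard_iff_nontrivial]

lemma Set.Nontrivial.sdiff_singleton_nonempty {α : Type*} {s : Set α} (hs : s.Nontrivial)
    (a : α) : (s \ {a}).Nonempty :=
  let ⟨b, hb, hba⟩ := hs.exists_ne a
  ⟨b, hb, hba⟩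

lemma ENat.le_or_le_of_add_le_add_add_one {x y R : ℕ∞} (h : x + y ≤ R + R + 1) (hR : R ≠ ⊤) :
    x ≤ R ∨ y ≤ R := by
  by_contra! hxy
  lift R to ℕ using hR
  have h2 := (add_le_add (Order.add_one_le_of_lt hxy.1) (Order.add_one_le_of_lt hxy.2)).trans h
  norm_cast at h2
  omega

lemma Set.inter_nonempty_or_of_union_eq_union {α : Type*} {X₁ X₂ Y₁ Y₂ : Set α}
    (h : X₁ ∪ X₂ = Y₁ ∪ Y₂) (hX₁ : X₁.Nonempty) (hX₂ : X₂.Nonempty) (hY₁ : Y₁.Nonempty)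
    (hY₂ : Y₂.Nonempty) :
    ((X₁ ∩ Y₁).Nonempty ∧ (X₂ ∩ Y₂).Nonempty) ∨ ((X₁ ∩ Y₂).Nonempty ∧ (X₂ ∩ Y₁).Nonempty) := by
  simp only [Set.Nonempty, Set.ext_iff, mem_union, mem_inter_iff] at *
  grind

lemma isLoopE_iff {M : Matroid ℕ} {e : ℕ} : IsLoopE M e ↔ M.IsLoop e := by
  rw [IsLoopE, ← singleton_dep, dep_iff, singleton_subset_iff, and_comm]

lemma isColoopE_iff {M : Matroid ℕ} {e : ℕ} : IsColoopE M e ↔ M.IsColoop e :=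
  ⟨fun h => isColoop_iff_forall_mem_isBase.2 fun _ hB => h.2 _ hB,
    fun h => ⟨h.mem_ground, fun _ hB => h.mem_of_isBase hB⟩⟩

namespace Matroid

variable {α : Type*} {M : Matroid α} {C X : Set α} {a e i : α}

lemma eq_loopyOn_or_eq_freeOn_of_ground_eq_singleton (h : M.E = {a}) :
    M = loopyOn {a} ∨ M = freeOn {a} := by
  by_cases ha : M.Indep {a}
  · exact Or.inr (eq_freeOn_iff.2 ⟨h, ha⟩)
  · refine Or.inl (eq_loopyOn_iff.2 ⟨h, fun X hX hXi => ?_⟩)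
    rw [h] at hX
    rcases subset_singleton_iff_eq.1 hX with rfl | rfl
    · rfl
    · exact absurd hXi ha

lemma Indep.eRk_contract_add_encard (hC : M.Indep C) (hX : X ⊆ M.E \ C) :
    (M ／ C).eRk X + C.encard = M.eRk (X ∪ C) := by
  obtain ⟨J, hJ⟩ := (M ／ C).exists_isBasis X hX
  have hJC : Disjoint J C := (subset_sdiff.1 (hJ.subset.trans hX)).2
  rw [← hJ.encard_eq_eRk, ← (hC.union_isBasis_union_of_contract_isBasis hJ).encard_eq_eRk,
    encard_union_eq hJC]

lemma IsNonloop.eRk_contractElem_add_one (hi : M.IsNonloop i) (hX : X ⊆ M.E \ {i}) :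
    (M ／ {i}).eRk X + 1 = M.eRk (insert i X) := by
  rw [← encard_singleton i, hi.indep.eRk_contract_add_encard hX, union_singleton]

lemma eRk_sdiff_singleton_of_not_isColoop (h : ¬ M.IsColoop e) :
    M.eRk (M.E \ {e}) = M.eRank := by
  rw [isColoop_iff_sdiff_not_spanning, not_not] at h
  exact h.eRk_eq

theorem induction_on_deleteElem_contractElem {P : (M : Matroid α) → M.E.Finite → Prop}
    (step : ∀ M hM, (∀ i ∈ M.E, P (M ＼ {i}) hM.sdiff ∧ P (M ／ {i}) hM.sdiff) → P M hM)
    (M : Matroid α) (hM : M.E.Finite) : P M hM := by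
  induction hn : M.E.ncard using Nat.strong_induction_on generalizing M with
  | _ n ih =>
    refine step M hM fun i hi => ?_
    have hlt : (M.E \ {i}).ncard < n := hn ▸ ncard_sdiff_singleton_lt_of_mem hi hM
    exact ⟨ih _ hlt _ hM.sdiff rfl, ih _ hlt _ hM.sdiff rfl⟩

end Matroid

namespace IsDirectSumDecomp

variable {M : Matroid ℕ} {A B I X₁ X₂ Y₁ Y₂ : Set ℕ} {e i : ℕ}

lemma left_nonempty (h : IsDirectSumDecomp M A B) : A.Nonempty := h.1

lemma right_nonempty (h : IsDirectSumDecomp M A B) : B.Nonempty := h.2.1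

lemma disjoint (h : IsDirectSumDecomp M A B) : Disjoint A B := h.2.2.1

lemma union_eq (h : IsDirectSumDecomp M A B) : A ∪ B = M.E := h.2.2.2.1

lemma indep_iff (h : IsDirectSumDecomp M A B) (hI : I ⊆ M.E) :
    M.Indep I ↔ M.Indep (I ∩ A) ∧ M.Indep (I ∩ B) :=
  h.2.2.2.2 I hI

lemma symm (h : IsDirectSumDecomp M A B) : IsDirectSumDecomp M B A :=
  ⟨h.right_nonempty, h.left_nonempty, h.disjoint.symm, union_comm A B ▸ h.union_eq,
    fun _ hI => (h.indep_iff hI).trans and_comm⟩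

lemma eRk_add_eRk_le (h : IsDirectSumDecomp M A B) : M.eRk A + M.eRk B ≤ M.eRank := by
  obtain ⟨JA, hJA⟩ := M.exists_isBasis' A
  obtain ⟨JB, hJB⟩ := M.exists_isBasis' B
  have hJAB : Disjoint JA JB := h.disjoint.mono hJA.subset hJB.subset
  have hJ : M.Indep (JA ∪ JB) := by
    have hJA' := hJA.subset
    have hJB' := hJB.subset
    have hAB := h.disjoint
    rw [h.indep_iff (union_subset hJA.indep.subset_ground hJB.indep.subset_ground)]
    convert And.intro hJA.indep hJB.indep using 2 <;> tauto_set
  calc M.eRk A + M.eRk B = (JA ∪ JB).encard := by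
        rw [← hJA.encard_eq_eRk, ← hJB.encard_eq_eRk, encard_union_eq hJAB]
    _ ≤ M.eRank := hJ.encard_le_eRank

lemma of_eRk_add_eRk_le [M.RankFinite] (hA : A.Nonempty) (hB : B.Nonempty) (hAB : Disjoint A B)
    (hE : A ∪ B = M.E) (hr : M.eRk A + M.eRk B ≤ M.eRank) : IsDirectSumDecomp M A B := by
  refine ⟨hA, hB, hAB, hE, fun I hI => ⟨fun h => ⟨h.subset inter_subset_left,
    h.subset inter_subset_left⟩, fun ⟨hIA, hIB⟩ => ?_⟩⟩
  obtain ⟨JA, hJA, hIJA⟩ := hIA.subset_isBasis'_of_subset inter_subset_right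
  obtain ⟨JB, hJB, hIJB⟩ := hIB.subset_isBasis'_of_subset inter_subset_right
  have hJ : M.Indep (JA ∪ JB) := by
    refine (M.isRkFinite_set _).indep_of_encard_le_eRk ?_
    calc (JA ∪ JB).encard ≤ JA.encard + JB.encard := encard_union_le _ _
      _ = M.eRk A + M.eRk B := by rw [hJA.encard_eq_eRk, hJB.encard_eq_eRk]
      _ ≤ M.eRank := hr
      _ = M.eRk (JA ∪ JB) := by
        rw [hJA.eRk_eq_eRk_union, union_comm, hJB.eRk_eq_eRk_union, union_comm, hE, eRk_ground]
  refine hJ.subset fun x hx => ?_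
  rcases (hE ▸ hI) hx with hxA | hxB
  · exact Or.inl (hIJA ⟨hx, hxA⟩)
  · exact Or.inr (hIJB ⟨hx, hxB⟩)

lemma isLoop_or_isColoop (h : IsDirectSumDecomp M {e} B) : M.IsLoop e ∨ M.IsColoop e := by
  have heE : e ∈ M.E := h.union_eq ▸ mem_union_left B rfl
  refine or_iff_not_imp_left.2 fun hl => isColoop_iff_forall_mem_isBase.2 fun Bs hBs => ?_
  refine hBs.mem_of_insert_indep ?_
  rw [h.indep_iff (insert_subset heE hBs.subset_ground)]
  refine ⟨((not_isLoop_iff heE).1 hl).indep.subset inter_subset_right, hBs.indep.subset ?_⟩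
  intro x ⟨hx, hxB⟩
  exact (mem_insert_iff.1 hx).resolve_left
    fun hxe => disjoint_singleton_left.1 h.disjoint (hxe ▸ hxB)

lemma singleton_sdiff_of_isLoop_or_isColoop (hne : (M.E \ {e}).Nonempty)
    (he : M.IsLoop e ∨ M.IsColoop e) : IsDirectSumDecomp M {e} (M.E \ {e}) := by
  have heE : e ∈ M.E := he.elim IsLoop.mem_ground IsColoop.mem_ground
  refine ⟨singleton_nonempty e, hne, disjoint_sdiff_right, by simp [heE], fun I hI => ?_⟩
  rw [← inter_sdiff_assoc, inter_eq_left.2 hI]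
  rcases he with he | he
  · refine ⟨fun h => ⟨h.subset inter_subset_left, h.subset sdiff_subset⟩, fun ⟨h1, h2⟩ => ?_⟩
    have : e ∉ I := fun heI => he.notMem_of_indep h1 ⟨heI, rfl⟩
    rwa [sdiff_singleton_eq_self this] at h2
  · have hsub : {e} ⊆ M.coloops := singleton_subset_iff.2 he
    rw [sdiff_indep_iff_indep_of_subset_coloops hsub, iff_and_self]
    exact fun _ => (M.coloops_indep.subset hsub).subset inter_subset_right

lemma deleteElem (h : IsDirectSumDecomp M A B) (hiA : i ∈ A) (hA : (A \ {i}).Nonempty) :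
    IsDirectSumDecomp (M ＼ {i}) (A \ {i}) B := by
  have hAB := h.disjoint
  have hE := h.union_eq
  have hiB : Disjoint B {i} := disjoint_singleton_right.2 (disjoint_left.1 hAB hiA)
  refine ⟨hA, h.right_nonempty, hAB.mono_left sdiff_subset, ?_, fun I hI => ?_⟩
  · rw [delete_ground, ← hE]
    tauto_set
  · have hIi : Disjoint I {i} := (subset_sdiff.1 hI).2
    have hIA : I ∩ (A \ {i}) = I ∩ A := by tauto_set
    simp only [delete_indep_iff, hIA, h.indep_iff (hI.trans sdiff_subset), hIi,
      hIi.mono_left inter_subset_left, and_true]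

lemma contractElem (h : IsDirectSumDecomp M A B) (hi : M.IsNonloop i) (hiA : i ∈ A)
    (hA : (A \ {i}).Nonempty) : IsDirectSumDecomp (M ／ {i}) (A \ {i}) B := by
  have hAB := h.disjoint
  have hE := h.union_eq
  have hiB : Disjoint B {i} := disjoint_singleton_right.2 (disjoint_left.1 hAB hiA)
  refine ⟨hA, h.right_nonempty, hAB.mono_left sdiff_subset, ?_, fun I hI => ?_⟩
  · rw [contract_ground, ← hE]
    tauto_set
  · have hiI : i ∉ I := fun hiI => (hI hiI).2 rfl
    have hiB' : i ∉ B := disjoint_singleton_right.1 hiB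
    have hIE : insert i I ⊆ M.E := insert_subset hi.mem_ground (hI.trans sdiff_subset)
    have hIBE : insert i (I ∩ B) ⊆ M.E := (insert_subset_insert inter_subset_left).trans hIE
    have hIiA : insert i I ∩ A = insert i (I ∩ (A \ {i})) := by
      ext x; rcases eq_or_ne x i with rfl | hx <;> simp [*]
    have hIiB : insert i I ∩ B = I ∩ B := by
      ext x; rcases eq_or_ne x i with rfl | hx <;> simp [*]
    have hIBiA : insert i (I ∩ B) ∩ A = {i} := by
      ext x; rcases eq_or_ne x i with rfl | hx
      · simp [*]
      · simpa [hx] using fun _ hxB hxA => disjoint_left.1 hAB hxA hxB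
    have hIBiB : insert i (I ∩ B) ∩ B = I ∩ B := by
      ext x; rcases eq_or_ne x i with rfl | hx <;> simp [*]
    simp only [hi.contractElem_indep_iff, h.indep_iff hIE, h.indep_iff hIBE, hIiA, hIiB,
      hIBiA, hIBiB, hi.indep, true_and, hiI, not_false_eq_true, mem_inter_iff, false_and]

lemma eRk_add_eRk_le_of_deleteElem (h : IsDirectSumDecomp (M ＼ {i}) X₁ X₂)
    (hi : ¬ M.IsColoop i) : M.eRk X₁ + M.eRk X₂ ≤ M.eRank := by
  have hE := h.union_eq
  rw [delete_ground] at hE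
  have hr := h.eRk_add_eRk_le
  rwa [delete_eq_restrict, restrict_eRk_eq _ (hE ▸ subset_union_left),
    restrict_eRk_eq _ (hE ▸ subset_union_right), eRank_restrict,
    eRk_sdiff_singleton_of_not_isColoop hi] at hr

lemma eRk_insert_add_eRk_insert_le_of_contractElem (h : IsDirectSumDecomp (M ／ {i}) Y₁ Y₂)
    (hi : M.IsNonloop i) : M.eRk (insert i Y₁) + M.eRk (insert i Y₂) ≤ M.eRank + 1 := by
  have hE := h.union_eq
  rw [contract_ground] at hE
  have hR : M.eRank = (M ／ {i}).eRank + 1 := by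
    rw [← eRk_ground, ← eRk_ground, contract_ground, hi.eRk_contractElem_add_one subset_rfl,
      insert_sdiff_singleton, insert_eq_of_mem hi.mem_ground]
  rw [← hi.eRk_contractElem_add_one (hE ▸ subset_union_left),
    ← hi.eRk_contractElem_add_one (hE ▸ subset_union_right), hR]
  calc _ = (M ／ {i}).eRk Y₁ + (M ／ {i}).eRk Y₂ + 1 + 1 := by ring
    _ ≤ _ := by gcongr; exact h.eRk_add_eRk_le

end IsDirectSumDecomp

section Connectivity

variable {M : Matroid ℕ} {X₁ X₂ Y₁ Y₂ : Set ℕ} {e i : ℕ}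

def IsDisconnected (M : Matroid ℕ) : Prop := ∃ A B, IsDirectSumDecomp M A B

lemma isDirectSumDecomp_insert_union_inter [M.RankFinite] (hi : i ∈ M.E)
    (hX : X₁ ∪ X₂ = M.E \ {i}) (hXd : Disjoint X₁ X₂) (hY : Y₁ ∪ Y₂ = M.E \ {i})
    (hYd : Disjoint Y₁ Y₂) (hne : (X₂ ∩ Y₂).Nonempty)
    (hr : M.eRk (insert i (X₁ ∪ Y₁)) + M.eRk (X₂ ∩ Y₂) ≤ M.eRank) :
    IsDirectSumDecomp M (insert i (X₁ ∪ Y₁)) (X₂ ∩ Y₂) := by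
  have hi' : {i} ⊆ M.E := singleton_subset_iff.2 hi
  refine .of_eRk_add_eRk_le (insert_nonempty _ _) hne ?_ ?_ hr
  all_goals clear hr hne; simp only [insert_eq]; tauto_set

lemma isDisconnected_of_crossing [M.RankFinite] (hi : i ∈ M.E)
    (hX : X₁ ∪ X₂ = M.E \ {i}) (hXd : Disjoint X₁ X₂) (hY : Y₁ ∪ Y₂ = M.E \ {i})
    (hYd : Disjoint Y₁ Y₂) (h₁₁ : (X₁ ∩ Y₁).Nonempty) (h₂₂ : (X₂ ∩ Y₂).Nonempty)
    (hrX : M.eRk X₁ + M.eRk X₂ ≤ M.eRank)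
    (hrY : M.eRk (insert i Y₁) + M.eRk (insert i Y₂) ≤ M.eRank + 1) : IsDisconnected M := by
  have hiX₁ : i ∉ X₁ := fun h => ((hX ▸ mem_union_left X₂ h) : i ∈ M.E \ {i}).2 rfl
  have hiX₂ : i ∉ X₂ := fun h => ((hX ▸ mem_union_right X₁ h) : i ∈ M.E \ {i}).2 rfl
  have hsub₁ := M.eRk_inter_add_eRk_union_le X₁ (insert i Y₁)
  have hsub₂ := M.eRk_inter_add_eRk_union_le X₂ (insert i Y₂)
  rw [inter_insert_of_notMem hiX₁, union_insert] at hsub₁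
  rw [inter_insert_of_notMem hiX₂, union_insert] at hsub₂
  have hsum : M.eRk (insert i (X₁ ∪ Y₁)) + M.eRk (X₂ ∩ Y₂)
      + (M.eRk (insert i (X₂ ∪ Y₂)) + M.eRk (X₁ ∩ Y₁)) ≤ M.eRank + M.eRank + 1 :=
    calc _ = (M.eRk (X₁ ∩ Y₁) + M.eRk (insert i (X₁ ∪ Y₁)))
          + (M.eRk (X₂ ∩ Y₂) + M.eRk (insert i (X₂ ∪ Y₂))) := by ring
      _ ≤ (M.eRk X₁ + M.eRk X₂) + (M.eRk (insert i Y₁) + M.eRk (insert i Y₂)) := by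
        grw [hsub₁, hsub₂]; exact (add_add_add_comm ..).le
      _ ≤ M.eRank + (M.eRank + 1) := add_le_add hrX hrY
      _ = _ := (add_assoc ..).symm
  -- The two candidate separations have total rank at most `2 r(M) + 1`, so one is tight.
  rcases ENat.le_or_le_of_add_le_add_add_one hsum ((eRank_ne_top_iff M).2 ‹_›) with hr | hr
  · exact ⟨_, _, isDirectSumDecomp_insert_union_inter hi hX hXd hY hYd h₂₂ hr⟩
  · exact ⟨_, _, isDirectSumDecomp_insert_union_inter hi (union_comm X₁ X₂ ▸ hX) hXd.symm
      (union_comm Y₁ Y₂ ▸ hY) hYd.symm (inter_comm .. ▸ h₁₁) hr⟩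

lemma IsDisconnected.ground_nontrivial (h : IsDisconnected M) : M.E.Nontrivial := by
  obtain ⟨A, B, h⟩ := h
  obtain ⟨a, ha⟩ := h.left_nonempty
  obtain ⟨b, hb⟩ := h.right_nonempty
  exact ⟨a, h.union_eq ▸ mem_union_left B ha, b, h.union_eq ▸ mem_union_right A hb,
    fun hab => disjoint_left.1 h.disjoint ha (hab ▸ hb)⟩

lemma isDisconnected_of_isLoop_or_isColoop (hE : M.E.Nontrivial)
    (he : M.IsLoop e ∨ M.IsColoop e) : IsDisconnected M :=
  ⟨_, _, .singleton_sdiff_of_isLoop_or_isColoop (hE.sdiff_singleton_nonempty e) he⟩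

lemma IsDisconnected.deleteElem_and_contractElem (h : IsDisconnected M) (hi : M.IsNonloop i)
    (hic : ¬ M.IsColoop i) : IsDisconnected (M ＼ {i}) ∧ IsDisconnected (M ／ {i}) := by
  obtain ⟨A, B, h⟩ := h
  wlog hiA : i ∈ A generalizing A B
  · have hiE : i ∈ A ∪ B := h.union_eq ▸ hi.mem_ground
    exact this B A h.symm (hiE.resolve_left hiA)
  have hA : (A \ {i}).Nonempty := by
    refine nonempty_iff_ne_empty.2 fun hAi => ?_
    obtain rfl : A = {i} := (sdiff_eq_empty.1 hAi).antisymm (singleton_subset_iff.2 hiA)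
    exact h.isLoop_or_isColoop.elim hi.not_isLoop hic
  exact ⟨⟨_, _, h.deleteElem hiA hA⟩, ⟨_, _, h.contractElem hi hiA hA⟩⟩

lemma isDisconnected_of_deleteElem_of_contractElem [M.RankFinite] (hi : M.IsNonloop i)
    (hic : ¬ M.IsColoop i) (hd : IsDisconnected (M ＼ {i})) (hc : IsDisconnected (M ／ {i})) :
    IsDisconnected M := by
  obtain ⟨X₁, X₂, hX⟩ := hd
  obtain ⟨Y₁, Y₂, hY⟩ := hc
  have hXE : X₁ ∪ X₂ = M.E \ {i} := hX.union_eq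
  have hYE : Y₁ ∪ Y₂ = M.E \ {i} := hY.union_eq
  have hrX := hX.eRk_add_eRk_le_of_deleteElem hic
  have hrY := hY.eRk_insert_add_eRk_insert_le_of_contractElem hi
  rcases inter_nonempty_or_of_union_eq_union (hXE.trans hYE.symm) hX.left_nonempty
    hX.right_nonempty hY.left_nonempty hY.right_nonempty with ⟨h₁₁, h₂₂⟩ | ⟨h₁₂, h₂₁⟩
  · exact isDisconnected_of_crossing hi.mem_ground hXE hX.disjoint hYE hY.disjoint h₁₁ h₂₂ hrX hrY
  · exact isDisconnected_of_crossing hi.mem_ground hXE hX.disjoint (union_comm Y₁ Y₂ ▸ hYE)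
      hY.disjoint.symm h₁₂ h₂₁ hrX (add_comm (M.eRk (insert i Y₁)) _ ▸ hrY)

end Connectivity

structure IsBetaInvariant (β : Matroid ℕ → ℤ) : Prop where
  loopyOn_singleton (e : ℕ) : β (loopyOn {e}) = 0
  freeOn_singleton (e : ℕ) : β (freeOn {e}) = 1
  eq_zero_of_isLoop_or_isColoop (M : Matroid ℕ) (e : ℕ) :
    M.E.Nontrivial → M.IsLoop e ∨ M.IsColoop e → β M = 0
  eq_contractElem_add_deleteElem (M : Matroid ℕ) (i : ℕ) :
    M.IsNonloop i → ¬ M.IsColoop i → β M = β (M ／ {i}) + β (M ＼ {i})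

namespace IsBetaInvariant

variable {β : Matroid ℕ → ℤ}

theorem nonneg (hβ : IsBetaInvariant β) (M : Matroid ℕ) (hM : M.E.Finite)
    (hne : M.E.Nonempty) : 0 ≤ β M := by
  induction M, hM using induction_on_deleteElem_contractElem with
  | step M _ ih =>
    rcases hne.exists_eq_singleton_or_nontrivial with ⟨a, ha⟩ | hnt
    · rcases eq_loopyOn_or_eq_freeOn_of_ground_eq_singleton ha with rfl | rfl
      · rw [hβ.loopyOn_singleton]
      · rw [hβ.freeOn_singleton]
        exact zero_le_one
    obtain ⟨i, hi⟩ := hnt.nonempty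
    by_cases hlc : M.IsLoop i ∨ M.IsColoop i
    · rw [hβ.eq_zero_of_isLoop_or_isColoop M i hnt hlc]
    obtain ⟨hil, hic⟩ := not_or.1 hlc
    rw [hβ.eq_contractElem_add_deleteElem M i ((not_isLoop_iff hi).1 hil) hic]
    exact add_nonneg ((ih i hi).2 (hnt.sdiff_singleton_nonempty i))
      ((ih i hi).1 (hnt.sdiff_singleton_nonempty i))

theorem eq_zero_of_isDisconnected (hβ : IsBetaInvariant β) (M : Matroid ℕ) (hM : M.E.Finite)
    (hd : IsDisconnected M) : β M = 0 := by
  induction M, hM using induction_on_deleteElem_contractElem with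
  | step M _ ih =>
    obtain ⟨i, hi⟩ := hd.ground_nontrivial.nonempty
    by_cases hlc : M.IsLoop i ∨ M.IsColoop i
    · exact hβ.eq_zero_of_isLoop_or_isColoop M i hd.ground_nontrivial hlc
    obtain ⟨hil, hic⟩ := not_or.1 hlc
    rw [not_isLoop_iff hi] at hil
    obtain ⟨hdel, hcon⟩ := hd.deleteElem_and_contractElem hil hic
    rw [hβ.eq_contractElem_add_deleteElem M i hil hic, (ih i hi).2 hcon, (ih i hi).1 hdel,
      add_zero]

theorem one_le_of_not_isDisconnected (hβ : IsBetaInvariant β) (M : Matroid ℕ)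
    (hM : M.E.Finite) (hnt : M.E.Nontrivial) (hc : ¬ IsDisconnected M) : 1 ≤ β M := by
  induction M, hM using induction_on_deleteElem_contractElem with
  | step M hM ih =>
    have : M.Finite := ⟨hM⟩
    have hnl : ∀ e ∈ M.E, M.IsNonloop e := fun e he =>
      (not_isLoop_iff he).1 fun h => hc (isDisconnected_of_isLoop_or_isColoop hnt (.inl h))
    have hnc : ∀ e, ¬ M.IsColoop e := fun e h =>
      hc (isDisconnected_of_isLoop_or_isColoop hnt (.inr h))
    obtain ⟨i, hi⟩ := hnt.nonempty
    have hne := hnt.sdiff_singleton_nonempty i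
    rw [hβ.eq_contractElem_add_deleteElem M i (hnl i hi) (hnc i)]
    have hcon := hβ.nonneg (M ／ {i}) hM.sdiff hne
    have hdel := hβ.nonneg (M ＼ {i}) hM.sdiff hne
    rcases hne.exists_eq_singleton_or_nontrivial with ⟨f, hf⟩ | hnt'
    · have hfree : M ＼ {i} = freeOn {f} := by
        rw [delete_eq_restrict, hf, restrict_eq_freeOn_iff, indep_singleton]
        exact hnl f (sdiff_subset (hf.symm ▸ mem_singleton f))
      rw [hfree, hβ.freeOn_singleton]
      omega
    by_cases hd : IsDisconnected (M ＼ {i})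
    · have := (ih i hi).2 hnt' fun h =>
        hc (isDisconnected_of_deleteElem_of_contractElem (hnl i hi) (hnc i) hd h)
      omega
    · have := (ih i hi).1 hnt' hd
      omega

end IsBetaInvariant

/-- For a (finite) matroid `M` on at least two elements, the beta invariant `β(M)` is zero
if and only if `M` is disconnected, i.e. a direct sum of two matroids on nonempty ground
sets.  (The hypothesis of at least two elements excludes `U_{0,1}`, and `U_{1,1}`.) -/
theorem beta_eq_zero_iff_disconnected (β : Matroid ℕ → ℤ)
    (hβ0 : ∀ e : ℕ, β (Matroid.loopyOn {e}) = 0)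
    (hβ1 : ∀ e : ℕ, β (Matroid.freeOn {e}) = 1)
    (hβlc : ∀ M : Matroid ℕ, 2 ≤ M.E.encard → (∃ e, IsLoopE M e ∨ IsColoopE M e) → β M = 0)
    (hβdc : ∀ (M : Matroid ℕ) (i : ℕ), i ∈ M.E → ¬ IsLoopE M i → ¬ IsColoopE M i →
      β M = β (mContract M {i}) + β (mDelete M {i}))
    (M : Matroid ℕ) (hfin : M.E.Finite) (h2 : 2 ≤ M.E.encard) :
    β M = 0 ↔ ∃ A B, IsDirectSumDecomp M A B := by
  have hβ : IsBetaInvariant β :=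
    { loopyOn_singleton := hβ0
      freeOn_singleton := hβ1
      eq_zero_of_isLoop_or_isColoop := fun M e hnt he =>
        hβlc M (two_le_encard_iff_nontrivial.2 hnt) ⟨e, by rwa [isLoopE_iff, isColoopE_iff]⟩
      eq_contractElem_add_deleteElem := fun M i hi hic =>
        hβdc M i hi.mem_ground (by rwa [isLoopE_iff, not_isLoop_iff hi.mem_ground])
          (by rwa [isColoopE_iff]) }
  have hnt : M.E.Nontrivial := two_le_encard_iff_nontrivial.1 h2
  refine ⟨fun h0 => ?_, hβ.eq_zero_of_isDisconnected M hfin⟩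
  by_contra hc
  have := hβ.one_le_of_not_isDisconnected M hfin hnt hc
  omega
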